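/- Let Ω be a bounded open convex domain with Hilbert metric d_Ω, and let σ: R → Ω be a bi-infinite projective line in Ω. For x ∈ Ω, let P_σ(x) = { y ∈ σ : d_Ω(x,y) = d_Ω(x,σ) } be the set of closest points on σ to x. Then P_σ(x) is either a single point or a closed subsegment [σ(T₋), σ(T₊)] for some finite T₋ < T₊; in particular, P_σ(x) is convex. -/

import Mathlib

open Set Filter Classical

abbrev Ed (d : ℕ) := EuclideanSpace ℝ (Fin d)

/-- A properly convex domain in an affine chart: a bounded open convex nonempty set. -/
def IsProperlyConvex {d : ℕ} (Ω : Set (Ed d)) : Prop :=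
  IsOpen Ω ∧ Convex ℝ Ω ∧ Bornology.IsBounded Ω ∧ Ω.Nonempty

/-- The face of `x`: `x` together with all points `q` such that some segment inside the
closure of `Ω` contains both `x` and `q` in its interior. -/
def face {d : ℕ} (Ω : Set (Ed d)) (x : Ed d) : Set (Ed d) :=
  insert x {q | ∃ u v : Ed d, segment ℝ u v ⊆ closure Ω ∧
    x ∈ openSegment ℝ u v ∧ q ∈ openSegment ℝ u v}

/-- The Hilbert metric on a bounded open convex set, defined via the cross-ratio of
`x`, `y` and the two intersection points of the line through `x, y` with the boundary. -/
noncomputable def hilbertDist {d : ℕ} (Ω : Set (Ed d)) (x y : Ed d) : ℝ :=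
  if x = y then 0 else
    let a := x + (sSup {t : ℝ | x + t • (x - y) ∈ Ω}) • (x - y)
    let b := y + (sSup {t : ℝ | y + t • (y - x) ∈ Ω}) • (y - x)
    Real.log ((‖b - x‖ * ‖y - a‖) / (‖b - y‖ * ‖x - a‖))

open scoped Pointwise

/-!
For fixed `x`, `f t = d_Ω(x, σ t)` is `1`-Lipschitz and tends to `∞` at both ends (triangle
inequality and unit speed), so its minimizers form a nonempty compact set. Hilbert balls are
convex: applied to balls centred on `σ` itself this shows that `σ` runs monotonically along its
line, and then applied to balls centred at `x` it shows that `f` is quasiconvex. Hence the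
minimizers form an interval `[T₋, T₊]`.

Both metric facts come from one description of the cross-ratio: if `y - x = s • (b - x)` and
`x - y = u • (a - x)` with `a, b ∈ closure Ω`, then `exp (d_Ω(x, y)) * (1 - s) ≤ 1 + u`, with
equality when `a, b` are the endpoints of the chord through `x, y`. Since `closure Ω` is convex,
such witnesses combine linearly, both along convex combinations of two points and along the
concatenation of the segments `[x, y]` and `[y, z]`.
-/

lemma QuasiconvexOn.le_max_of_mem_segment {𝕜 E β : Type*} [Semiring 𝕜] [PartialOrder 𝕜]
    [AddCommMonoid E] [SMul 𝕜 E] [LinearOrder β] {s : Set E} {f : E → β}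
    (hf : QuasiconvexOn 𝕜 s f) {x y z : E} (hx : x ∈ s) (hy : y ∈ s) (hz : z ∈ segment 𝕜 x y) :
    f z ≤ max (f x) (f y) :=
  ((hf _).segment_subset ⟨hx, le_max_left _ _⟩ ⟨hy, le_max_right _ _⟩ hz).2

theorem exists_setOf_eq_iInf_eq_Icc {f : ℝ → ℝ} (hcont : Continuous f)
    (htend : Tendsto f (cocompact ℝ) atTop) (hq : QuasiconvexOn ℝ univ f) :
    ∃ a b, a ≤ b ∧ {t | f t = ⨅ s, f s} = Icc a b := by
  obtain ⟨t₀, ht₀⟩ := hcont.exists_forall_le htend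
  have hinf : ⨅ s, f s = f t₀ :=
    le_antisymm (ciInf_le ⟨f t₀, forall_mem_range.2 ht₀⟩ t₀) (le_ciInf ht₀)
  have hA : {t | f t = ⨅ s, f s} = {t | t ∈ univ ∧ f t ≤ f t₀} := by
    ext t
    simp only [hinf, mem_ofPred_eq, mem_univ, true_and, (ht₀ t).ge_iff_eq']
  rw [hA]
  have hconn : IsConnected {t | t ∈ univ ∧ f t ≤ f t₀} :=
    ⟨⟨t₀, trivial, le_rfl⟩, (hq (f t₀)).isPreconnected⟩
  obtain ⟨K, hK, hKc⟩ := mem_cocompact.1 (htend.eventually (eventually_gt_atTop (f t₀)))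
  have hcpt : IsCompact {t | t ∈ univ ∧ f t ≤ f t₀} :=
    hK.of_isClosed_subset (isClosed_univ.inter (isClosed_le hcont continuous_const))
      fun t ht => not_not.1 fun htK => (hKc htK).not_ge ht.2
  exact ⟨_, _, csInf_le_csSup hconn.nonempty hcpt.bddBelow hcpt.bddAbove,
    eq_Icc_of_connected_compact hconn hcpt⟩

section Pointwise

variable {M E : Type*} [Monoid M] [AddCommGroup E] [DistribMulAction M E]

lemma add_smul_sub_mem_smul_neg_vadd {S : Set E} {a b w : E} {s : M} (h : w ∈ s • (-b +ᵥ S)) :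
    w + s • (b - a) ∈ s • (-a +ᵥ S) := by
  obtain ⟨_, ⟨k, hk, rfl⟩, rfl⟩ := h
  refine ⟨-a +ᵥ k, ⟨k, hk, rfl⟩, ?_⟩
  simp only [vadd_eq_add, ← smul_add]
  congr 1
  abel

end Pointwise

section ExitTime

variable {E : Type*} [NormedAddCommGroup E] [NormedSpace ℝ E] {Ω : Set E} {p v : E}

noncomputable def exitTime (Ω : Set E) (p v : E) : ℝ := sSup {t : ℝ | p + t • v ∈ Ω}

lemma bddAbove_setOf_add_smul_mem (hb : Bornology.IsBounded Ω) (hv : v ≠ 0) :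
    BddAbove {t : ℝ | p + t • v ∈ Ω} := by
  have hanti : AntilipschitzWith ‖v‖₊⁻¹ (fun t : ℝ => p + t • v) :=
    AntilipschitzWith.of_le_mul_dist fun s t => le_of_eq <| by
      rw [dist_eq_norm, dist_eq_norm, add_sub_add_left_eq_sub, ← sub_smul, norm_smul,
        NNReal.coe_inv, coe_nnnorm, mul_comm ‖s - t‖, inv_mul_cancel_left₀ (norm_ne_zero_iff.2 hv)]
  exact (hanti.isBounded_preimage hb).bddAbove

lemma exitTime_pos (ho : IsOpen Ω) (hb : Bornology.IsBounded Ω) (hp : p ∈ Ω) (hv : v ≠ 0) :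
    0 < exitTime Ω p v := by
  have hopen : IsOpen {t : ℝ | p + t • v ∈ Ω} := ho.preimage (by fun_prop)
  obtain ⟨ε, hε, hball⟩ := Metric.isOpen_iff.1 hopen 0 (by simpa using hp)
  have hmem : ε / 2 ∈ {t : ℝ | p + t • v ∈ Ω} :=
    hball (by rw [Metric.mem_ball, Real.dist_0_eq_abs, abs_of_pos (half_pos hε)]; linarith)
  exact (half_pos hε).trans_le (le_csSup (bddAbove_setOf_add_smul_mem hb hv) hmem)

lemma add_exitTime_smul_mem_closure (hb : Bornology.IsBounded Ω) (hp : p ∈ Ω) (hv : v ≠ 0) :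
    p + exitTime Ω p v • v ∈ closure Ω :=
  map_mem_closure (f := fun t : ℝ => p + t • v) (by fun_prop)
    (csSup_mem_closure ⟨0, by simpa using hp⟩ (bddAbove_setOf_add_smul_mem hb hv))
    fun _ ht => ht

lemma le_exitTime_of_mem_closure (ho : IsOpen Ω) (hc : Convex ℝ Ω) (hb : Bornology.IsBounded Ω)
    (hp : p ∈ Ω) (hv : v ≠ 0) {t : ℝ} (ht : 0 ≤ t) (hcl : p + t • v ∈ closure Ω) :
    t ≤ exitTime Ω p v := by
  refine le_of_forall_lt_imp_le_of_dense fun r hr => ?_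
  rcases lt_or_ge r 0 with hr0 | hr0
  · exact hr0.le.trans (exitTime_pos ho hb hp hv).le
  have htpos : 0 < t := hr0.trans_lt hr
  have hmem : p + r • v ∈ Ω := by
    have := hc.combo_interior_closure_mem_interior (ho.interior_eq.symm ▸ hp) hcl
      (sub_pos.2 ((div_lt_one htpos).2 hr)) (div_nonneg hr0 ht) (sub_add_cancel 1 (r / t))
    rw [ho.interior_eq] at this
    convert this using 1
    rw [smul_add, smul_smul, div_mul_cancel₀ r htpos.ne']
    module
  exact le_csSup (bddAbove_setOf_add_smul_mem hb hv) hmem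

lemma inv_exitTime_le_of_mem_smul (ho : IsOpen Ω) (hc : Convex ℝ Ω)
    (hb : Bornology.IsBounded Ω) (hp : p ∈ Ω) (hv : v ≠ 0) {s : ℝ} (hs : 0 ≤ s)
    (h : v ∈ s • (-p +ᵥ closure Ω)) : (exitTime Ω p v)⁻¹ ≤ s := by
  have hs0 : s ≠ 0 := by
    rintro rfl
    exact hv (zero_smul_set_subset _ h)
  rw [inv_le_comm₀ (exitTime_pos ho hb hp hv) (hs.lt_of_ne' hs0)]
  obtain ⟨_, ⟨k, hk, rfl⟩, rfl⟩ := h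
  refine le_exitTime_of_mem_closure ho hc hb hp hv (inv_nonneg.2 hs) ?_
  rw [inv_smul_smul₀ hs0]
  simpa only [vadd_eq_add, add_neg_cancel_left] using hk

end ExitTime

section HilbertDist

variable {d : ℕ} {Ω : Set (Ed d)} {x y z : Ed d}

lemma hilbertDist_self (Ω : Set (Ed d)) (x : Ed d) : hilbertDist Ω x x = 0 := if_pos rfl

lemma exp_hilbertDist (ho : IsOpen Ω) (hb : Bornology.IsBounded Ω) (hx : x ∈ Ω) (hy : y ∈ Ω)
    (hne : x ≠ y) :
    Real.exp (hilbertDist Ω x y) =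
      (1 + (exitTime Ω y (y - x))⁻¹) * (1 + (exitTime Ω x (x - y))⁻¹) := by
  have hTb := exitTime_pos ho hb hy (sub_ne_zero.2 hne.symm)
  have hTa := exitTime_pos ho hb hx (sub_ne_zero.2 hne)
  have hxy : 0 < ‖y - x‖ := norm_pos_iff.2 (sub_ne_zero.2 hne.symm)
  rw [hilbertDist, if_neg hne]
  unfold exitTime at *
  set Tb := sSup {t : ℝ | y + t • (y - x) ∈ Ω}
  set Ta := sSup {t : ℝ | x + t • (x - y) ∈ Ω}
  dsimp only
  rw [show y + Tb • (y - x) - x = (1 + Tb) • (y - x) by module,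
    show y - (x + Ta • (x - y)) = (1 + Ta) • (y - x) by module,
    show y + Tb • (y - x) - y = Tb • (y - x) by module,
    show x - (x + Ta • (x - y)) = Ta • (y - x) by module]
  simp only [norm_smul, Real.norm_eq_abs, abs_of_pos hTb, abs_of_pos hTa,
    abs_of_pos (by linarith : 0 < 1 + Tb), abs_of_pos (by linarith : 0 < 1 + Ta)]
  rw [Real.exp_log (by positivity)]
  field_simp
  ring

lemma exists_exp_hilbertDist_mul_eq (ho : IsOpen Ω) (hb : Bornology.IsBounded Ω) (hx : x ∈ Ω)
    (hy : y ∈ Ω) :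
    ∃ s u : ℝ, 0 ≤ s ∧ s < 1 ∧ 0 ≤ u ∧ y - x ∈ s • (-x +ᵥ closure Ω) ∧
      x - y ∈ u • (-x +ᵥ closure Ω) ∧ Real.exp (hilbertDist Ω x y) * (1 - s) = 1 + u := by
  rcases eq_or_ne x y with rfl | hne
  · refine ⟨0, 0, le_rfl, one_pos, le_rfl, ?_, ?_, by simp [hilbertDist_self]⟩ <;>
      · rw [sub_self]
        exact zero_mem_smul_set ⟨x, subset_closure hx, neg_add_cancel x⟩
  have hv : y - x ≠ 0 := sub_ne_zero.2 hne.symm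
  have hv' : x - y ≠ 0 := sub_ne_zero.2 hne
  set Tb := exitTime Ω y (y - x)
  set Ta := exitTime Ω x (x - y)
  have hTb : 0 < Tb := exitTime_pos ho hb hy hv
  have hTa : 0 < Ta := exitTime_pos ho hb hx hv'
  refine ⟨(1 + Tb)⁻¹, Ta⁻¹, by positivity, inv_lt_one_of_one_lt₀ (by linarith), by positivity,
    ⟨_, ⟨_, add_exitTime_smul_mem_closure hb hy hv, rfl⟩, ?_⟩,
    ⟨_, ⟨_, add_exitTime_smul_mem_closure hb hx hv', rfl⟩, ?_⟩, ?_⟩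
  · change (1 + Tb)⁻¹ • (-x + (y + Tb • (y - x))) = y - x
    rw [show -x + (y + Tb • (y - x)) = (1 + Tb) • (y - x) by module]
    exact inv_smul_smul₀ (by positivity) _
  · change Ta⁻¹ • (-x + (x + Ta • (x - y))) = x - y
    rw [show -x + (x + Ta • (x - y)) = Ta • (x - y) by module]
    exact inv_smul_smul₀ hTa.ne' _
  · rw [exp_hilbertDist ho hb hx hy hne]
    change (1 + Tb⁻¹) * (1 + Ta⁻¹) * (1 - (1 + Tb)⁻¹) = 1 + Ta⁻¹
    field_simp
    ring

lemma exp_hilbertDist_mul_le (ho : IsOpen Ω) (hc : Convex ℝ Ω) (hb : Bornology.IsBounded Ω)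
    (hx : x ∈ Ω) (hy : y ∈ Ω) {s u : ℝ} (hs : 0 ≤ s) (hu : 0 ≤ u)
    (hys : y - x ∈ s • (-x +ᵥ closure Ω)) (hyu : x - y ∈ u • (-x +ᵥ closure Ω)) :
    Real.exp (hilbertDist Ω x y) * (1 - s) ≤ 1 + u := by
  rcases eq_or_ne x y with rfl | hne
  · simp only [hilbertDist_self, Real.exp_zero]
    linarith
  rcases le_or_gt 1 s with hs1 | hs1
  · nlinarith [Real.exp_pos (hilbertDist Ω x y)]
  have hys' : y - x ∈ ((1 - s)⁻¹ * s) • (-y +ᵥ closure Ω) := by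
    have := smul_mem_smul_set (a := (1 - s)⁻¹) (add_smul_sub_mem_smul_neg_vadd (a := y) hys)
    rwa [← mul_smul, show y - x + s • (x - y) = (1 - s) • (y - x) by module,
      inv_smul_smul₀ (sub_pos.2 hs1).ne'] at this
  have hTb := inv_exitTime_le_of_mem_smul ho hc hb hy (sub_ne_zero.2 hne.symm)
    (mul_nonneg (inv_nonneg.2 (sub_pos.2 hs1).le) hs) hys'
  have hTa := inv_exitTime_le_of_mem_smul ho hc hb hx (sub_ne_zero.2 hne) hu hyu
  have hTa₀ := inv_pos.2 (exitTime_pos ho hb hx (sub_ne_zero.2 hne))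
  rw [exp_hilbertDist ho hb hx hy hne]
  calc (1 + (exitTime Ω y (y - x))⁻¹) * (1 + (exitTime Ω x (x - y))⁻¹) * (1 - s)
      ≤ (1 + (1 - s)⁻¹ * s) * (1 + u) * (1 - s) := by gcongr
    _ = 1 + u := by field_simp; ring

theorem hilbertDist_triangle (hΩ : IsProperlyConvex Ω) (hx : x ∈ Ω) (hy : y ∈ Ω) (hz : z ∈ Ω) :
    hilbertDist Ω x z ≤ hilbertDist Ω x y + hilbertDist Ω y z := by
  obtain ⟨ho, hc, hb, -⟩ := hΩ
  have hC : Convex ℝ (-x +ᵥ closure Ω) := hc.closure.vadd _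
  obtain ⟨s₁, u₁, hs₁, hs₁', hu₁, hys, hyu, he₁⟩ := exists_exp_hilbertDist_mul_eq ho hb hx hy
  obtain ⟨s₂, u₂, hs₂, hs₂', hu₂, hzs, hzu, he₂⟩ := exists_exp_hilbertDist_mul_eq ho hb hy hz
  have hs₂₁ : 0 ≤ (1 - s₂) * s₁ := mul_nonneg (by linarith) hs₁
  have hfwd : z - x ∈ (s₂ + (1 - s₂) * s₁) • (-x +ᵥ closure Ω) := by
    rw [hC.add_smul hs₂ hs₂₁, mul_smul]
    convert add_mem_add (add_smul_sub_mem_smul_neg_vadd (a := x) hzs)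
      (smul_mem_smul_set (a := 1 - s₂) hys) using 1
    module
  have hbwd : x - z ∈ (u₂ + (1 + u₂) * u₁) • (-x +ᵥ closure Ω) := by
    rw [hC.add_smul hu₂ (by positivity), mul_smul]
    convert add_mem_add (add_smul_sub_mem_smul_neg_vadd (a := x) hzu)
      (smul_mem_smul_set (a := 1 + u₂) hyu) using 1
    module
  have hle := exp_hilbertDist_mul_le ho hc hb hx hz (add_nonneg hs₂ hs₂₁) (by positivity) hfwd hbwd
  rw [← Real.exp_le_exp, Real.exp_add]
  refine le_of_mul_le_mul_right ?_ (mul_pos (sub_pos.2 hs₁') (sub_pos.2 hs₂'))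
  calc Real.exp (hilbertDist Ω x z) * ((1 - s₁) * (1 - s₂))
      = Real.exp (hilbertDist Ω x z) * (1 - (s₂ + (1 - s₂) * s₁)) := by ring
    _ ≤ 1 + (u₂ + (1 + u₂) * u₁) := hle
    _ = Real.exp (hilbertDist Ω x y) * (1 - s₁) * (Real.exp (hilbertDist Ω y z) * (1 - s₂)) := by
      rw [he₁, he₂]; ring
    _ = _ := by ring

theorem quasiconvexOn_hilbertDist (hΩ : IsProperlyConvex Ω) (hx : x ∈ Ω) :
    QuasiconvexOn ℝ Ω (hilbertDist Ω x) := by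
  obtain ⟨ho, hc, hb, -⟩ := hΩ
  have hC : Convex ℝ (-x +ᵥ closure Ω) := hc.closure.vadd _
  refine quasiconvexOn_iff_le_max.2 ⟨hc, fun y hy z hz a b ha hb' hab => ?_⟩
  obtain ⟨s₁, u₁, hs₁, hs₁', hu₁, hys, hyu, he₁⟩ := exists_exp_hilbertDist_mul_eq ho hb hx hy
  obtain ⟨s₂, u₂, hs₂, hs₂', hu₂, hzs, hzu, he₂⟩ := exists_exp_hilbertDist_mul_eq ho hb hx hz
  have hfwd : a • y + b • z - x ∈ (a * s₁ + b * s₂) • (-x +ᵥ closure Ω) := by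
    rw [hC.add_smul (by positivity) (by positivity), mul_smul, mul_smul]
    convert add_mem_add (smul_mem_smul_set (a := a) hys) (smul_mem_smul_set (a := b) hzs) using 1
    linear_combination (norm := module) hab • x
  have hbwd : x - (a • y + b • z) ∈ (a * u₁ + b * u₂) • (-x +ᵥ closure Ω) := by
    rw [hC.add_smul (by positivity) (by positivity), mul_smul, mul_smul]
    convert add_mem_add (smul_mem_smul_set (a := a) hyu) (smul_mem_smul_set (a := b) hzu) using 1
    linear_combination (norm := module) -(hab • x)
  have hle := exp_hilbertDist_mul_le ho hc hb hx (hc hy hz ha hb' hab) (by positivity)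
    (by positivity) hfwd hbwd
  set M := max (hilbertDist Ω x y) (hilbertDist Ω x z)
  have hE₁ : Real.exp (hilbertDist Ω x y) ≤ Real.exp M := Real.exp_le_exp.2 (le_max_left _ _)
  have hE₂ : Real.exp (hilbertDist Ω x z) ≤ Real.exp M := Real.exp_le_exp.2 (le_max_right _ _)
  rw [← Real.exp_le_exp]
  have hS : a * s₁ + b * s₂ < 1 :=
    calc a * s₁ + b * s₂ ≤ max s₁ s₂ := by nlinarith [le_max_left s₁ s₂, le_max_right s₁ s₂]
      _ < 1 := max_lt hs₁' hs₂'
  refine le_of_mul_le_mul_right ?_ (sub_pos.2 hS)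
  calc Real.exp (hilbertDist Ω x (a • y + b • z)) * (1 - (a * s₁ + b * s₂))
      ≤ 1 + (a * u₁ + b * u₂) := hle
    _ = a * (Real.exp (hilbertDist Ω x y) * (1 - s₁)) +
        b * (Real.exp (hilbertDist Ω x z) * (1 - s₂)) := by
      rw [he₁, he₂]; linear_combination -hab
    _ ≤ a * (Real.exp M * (1 - s₁)) + b * (Real.exp M * (1 - s₂)) := by
      gcongr
    _ = Real.exp M * (1 - (a * s₁ + b * s₂)) := by linear_combination Real.exp M * hab

end HilbertDist

section GeodesicLine

variable {d : ℕ} {Ω : Set (Ed d)} {σ : ℝ → Ed d} {x : Ed d}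

lemma abs_sub_le_max_of_wbtw (hΩ : IsProperlyConvex Ω) (hσΩ : ∀ t, σ t ∈ Ω)
    (hunit : ∀ s t, hilbertDist Ω (σ s) (σ t) = |s - t|) {a b c : ℝ}
    (h : Wbtw ℝ (σ a) (σ b) (σ c)) (e : ℝ) : |e - b| ≤ max |e - a| |e - c| := by
  simpa only [hunit] using (quasiconvexOn_hilbertDist hΩ (hσΩ e)).le_max_of_mem_segment
    (hσΩ a) (hσΩ c) (mem_segment_iff_wbtw.2 h)

lemma wbtw_of_lt_of_lt (hΩ : IsProperlyConvex Ω) (hσΩ : ∀ t, σ t ∈ Ω)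
    (hline : Collinear ℝ (range σ)) (hunit : ∀ s t, hilbertDist Ω (σ s) (σ t) = |s - t|)
    {t₁ t t₂ : ℝ} (h₁ : t₁ < t) (h₂ : t < t₂) : Wbtw ℝ (σ t₁) (σ t) (σ t₂) := by
  have hcol : Collinear ℝ {σ t₁, σ t, σ t₂} :=
    hline.subset (by simp only [insert_subset_iff, mem_range_self, singleton_subset_iff, and_self])
  rcases hcol.wbtw_or_wbtw_or_wbtw with h | h | h
  · exact h
  · have := abs_sub_le_max_of_wbtw hΩ hσΩ hunit h t₁
    rw [sub_self, abs_zero, abs_of_neg (by linarith), abs_of_neg (by linarith)] at this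
    exact absurd this (not_le.2 (max_lt (by linarith) (by linarith)))
  · have := abs_sub_le_max_of_wbtw hΩ hσΩ hunit h t₂
    rw [sub_self, abs_zero, abs_of_pos (by linarith), abs_of_pos (by linarith)] at this
    exact absurd this (not_le.2 (max_lt (by linarith) (by linarith)))

lemma quasiconvexOn_hilbertDist_comp (hΩ : IsProperlyConvex Ω) (hσΩ : ∀ t, σ t ∈ Ω)
    (hline : Collinear ℝ (range σ)) (hunit : ∀ s t, hilbertDist Ω (σ s) (σ t) = |s - t|)
    (hx : x ∈ Ω) : QuasiconvexOn ℝ univ fun t => hilbertDist Ω x (σ t) := by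
  refine fun r => Set.OrdConnected.convex ⟨?_⟩
  rintro t₁ ⟨-, h₁⟩ t₂ ⟨-, h₂⟩ t ⟨ht₁, ht₂⟩
  refine ⟨trivial, ?_⟩
  rcases ht₁.eq_or_lt with rfl | ht₁
  · exact h₁
  rcases ht₂.eq_or_lt' with rfl | ht₂
  · exact h₂
  exact ((quasiconvexOn_hilbertDist hΩ hx).le_max_of_mem_segment (hσΩ t₁) (hσΩ t₂)
    (wbtw_of_lt_of_lt hΩ hσΩ hline hunit ht₁ ht₂).mem_segment).trans (max_le h₁ h₂)

lemma lipschitzWith_one_hilbertDist_comp (hΩ : IsProperlyConvex Ω) (hσΩ : ∀ t, σ t ∈ Ω)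
    (hunit : ∀ s t, hilbertDist Ω (σ s) (σ t) = |s - t|) (hx : x ∈ Ω) :
    LipschitzWith 1 fun t => hilbertDist Ω x (σ t) :=
  LipschitzWith.of_le_add fun s t => by
    simpa only [hunit, Real.dist_eq, abs_sub_comm t s] using
      hilbertDist_triangle hΩ hx (hσΩ t) (hσΩ s)

lemma tendsto_hilbertDist_comp_cocompact (hΩ : IsProperlyConvex Ω) (hσΩ : ∀ t, σ t ∈ Ω)
    (hunit : ∀ s t, hilbertDist Ω (σ s) (σ t) = |s - t|) (hx : x ∈ Ω) :
    Tendsto (fun t => hilbertDist Ω x (σ t)) (cocompact ℝ) atTop := by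
  refine tendsto_atTop_mono (fun t => ?_)
    (tendsto_atTop_add_const_right _ (-hilbertDist Ω (σ 0) x) tendsto_norm_cocompact_atTop)
  have := hilbertDist_triangle hΩ (hσΩ 0) hx (hσΩ t)
  rw [hunit, zero_sub, abs_neg] at this
  rw [Real.norm_eq_abs]
  linarith

end GeodesicLine

/-- The set of closest points on a bi-infinite projective line `σ` (a unit-speed
geodesic line lying on an affine line in `Ω`) to a point `x ∈ Ω` is either a single
point or a closed subsegment `σ '' [T₋, T₊]` with `T₋ < T₊`; in particular it is convex. -/
theorem closest_point_set_convex {d : ℕ} (Ω : Set (Ed d)) (hΩ : IsProperlyConvex Ω)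
    (σ : ℝ → Ed d) (hσΩ : ∀ t, σ t ∈ Ω)
    (hline : Collinear ℝ (Set.range σ))
    (hunit : ∀ s t : ℝ, hilbertDist Ω (σ s) (σ t) = |s - t|)
    (x : Ed d) (hx : x ∈ Ω) :
    (∃ y : Ed d, {y : Ed d | y ∈ Set.range σ ∧
        hilbertDist Ω x y = ⨅ t : ℝ, hilbertDist Ω x (σ t)} = {y}) ∨
    (∃ T₁ T₂ : ℝ, T₁ < T₂ ∧ {y : Ed d | y ∈ Set.range σ ∧
        hilbertDist Ω x y = ⨅ t : ℝ, hilbertDist Ω x (σ t)} = σ '' Set.Icc T₁ T₂) := by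
  obtain ⟨a, b, hab, hmin⟩ := exists_setOf_eq_iInf_eq_Icc
    (lipschitzWith_one_hilbertDist_comp hΩ hσΩ hunit hx).continuous
    (tendsto_hilbertDist_comp_cocompact hΩ hσΩ hunit hx)
    (quasiconvexOn_hilbertDist_comp hΩ hσΩ hline hunit hx)
  have hclosest : {y : Ed d | y ∈ Set.range σ ∧
      hilbertDist Ω x y = ⨅ t : ℝ, hilbertDist Ω x (σ t)} = σ '' Icc a b := by
    rw [← hmin]
    exact image_preimage_eq_range_inter.symm
  rcases hab.eq_or_lt with rfl | hlt
  · exact Or.inl ⟨σ a, by rw [hclosest, Icc_self, image_singleton]⟩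
  · exact Or.inr ⟨a, b, hlt, hclosest⟩
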